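/- Let $Q:\mathbb{R}^S\to\mathbb{R}^{S\times S}$ be locally Lipschitz with $Q_{ss}(\phi)=-\sum_{k\ne s}Q_{ks}(\phi)$ and $Q_{ks}(\phi)\ge 0$ for $k\ne s$ and all $\phi$ in the relevant domain. Consider the coupled system $\dot z_i(t) = Q(\rho_i(t))z_i(t)$, $\rho_i(t)=\frac{1}{\langle d\rangle}\sum_{j=1}^N a_{ij} z_j(t)$, for fixed nonnegative weights $a_{ij}$ and $\langle d\rangle>0$. If $z_i(0)\in\Delta$ for all $i$, then a global solution exists, is unique, and $z_i(t)\in\Delta$ for all $t\ge 0$ and all $i$. -/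

import Mathlib

/-!
Clamping every coordinate to `[0, 1]` makes the NIMFA vector field globally Lipschitz and
bounded, so the clamped system has a global solution (Picard–Lindelöf on `[0, n]` for every `n`,
glued by uniqueness). The clamped field sums to zero over the states of each node, since the
columns of `Q` sum to zero, and it is nonnegative in every coordinate that is `≤ 0`, since the
clamp sends that coordinate to `0` and the off-diagonal rates are nonnegative. Hence each `z_i`
stays in the simplex, where the clamp is the identity, and the solution solves the original
system. Uniqueness holds because the NIMFA field is locally Lipschitz, hence Lipschitz on the
compact set swept out by two solutions over `[0, t]`.
-/

open Finset

/-- The probability simplex in `ℝ^S`. -/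
def stdSimplex15 (S : ℕ) : Set (Fin S → ℝ) :=
  {v | (∀ s, 0 ≤ v s) ∧ ∑ s : Fin S, v s = 1}

open Set NNReal Topology Matrix

section Lipschitz

variable {α ι : Type*} [PseudoMetricSpace α] [Fintype ι]

theorem LipschitzOnWith.pi {β : ι → Type*} [∀ i, PseudoMetricSpace (β i)]
    {f : ∀ i, α → β i} {K : ι → ℝ≥0} {s : Set α} (hf : ∀ i, LipschitzOnWith (K i) (f i) s) :
    LipschitzOnWith (∑ i, K i) (fun x i => f i x) s := by
  refine .of_dist_le_mul fun x hx y hy => (dist_pi_le_iff (by positivity)).2 fun i => ?_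
  refine ((hf i).dist_le_mul x hx y hy).trans (mul_le_mul_of_nonneg_right ?_ dist_nonneg)
  exact NNReal.coe_le_coe.2 (single_le_sum (fun j _ => (zero_le : 0 ≤ K j)) (mem_univ i))

theorem LocallyLipschitz.pi {β : ι → Type*} [∀ i, PseudoMetricSpace (β i)]
    {f : ∀ i, α → β i} (hf : ∀ i, LocallyLipschitz (f i)) : LocallyLipschitz fun x i => f i x := by
  intro x
  choose K t ht hK using fun i => hf i x
  exact ⟨∑ i, K i, ⋂ i, t i, Filter.iInter_mem.2 ht,
    LipschitzOnWith.pi fun i => (hK i).mono (iInter_subset _ i)⟩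

theorem LipschitzWith.piMap {β γ : ι → Type*} [∀ i, PseudoMetricSpace (β i)]
    [∀ i, PseudoMetricSpace (γ i)] {f : ∀ i, β i → γ i} {K : ℝ≥0}
    (hf : ∀ i, LipschitzWith K (f i)) : LipschitzWith K (Pi.map f) :=
  .of_dist_le_mul fun x y => (dist_pi_le_iff (by positivity)).2 fun i =>
    ((hf i).dist_le_mul _ _).trans (mul_le_mul_of_nonneg_left (dist_le_pi_dist x y i) K.2)

end Lipschitz

theorem image_nonneg_of_deriv_right_nonneg_of_neg {f f' : ℝ → ℝ} {a b : ℝ}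
    (hf : ContinuousOn f (Icc a b)) (hf' : ∀ x ∈ Ico a b, HasDerivWithinAt f (f' x) (Ici x) x)
    (ha : 0 ≤ f a) (hneg : ∀ x ∈ Ico a b, f x < 0 → 0 ≤ f' x) :
    ∀ ⦃x⦄, x ∈ Icc a b → 0 ≤ f x := by
  intro x hx
  -- fence `-f` by the barriers `ε (1 + (y - a))`, which it can only touch where `f < 0`
  have hfence : ∀ ε > 0, -f x ≤ ε * (1 + (x - a)) := fun ε hε =>
    image_le_of_deriv_right_lt_deriv_boundary hf.neg (fun y hy => (hf' y hy).neg)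
      (B := fun y => ε * (1 + (y - a))) (B' := fun _ => ε)
      (by simp only [Pi.neg_apply, sub_self, add_zero, mul_one]; linarith)
      (fun y => by simpa using (((hasDerivAt_id y).sub_const a).const_add 1).const_mul ε)
      (fun y hy hy' => by
        have : f y < 0 := by simp only [Pi.neg_apply] at hy'; nlinarith [hy.1]
        linarith [hneg y hy this]) hx
  have hpos : 0 < 1 + (x - a) := by linarith [hx.1]
  refine neg_nonpos.1 (le_of_forall_pos_le_add fun ε hε => ?_)
  simpa [div_mul_cancel₀ _ hpos.ne'] using hfence (ε / (1 + (x - a))) (div_pos hε hpos)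

section ODE

variable {E : Type*} [NormedAddCommGroup E] [NormedSpace ℝ E] {t₀ t : ℝ}

theorem IsIntegralCurveOn.hasDerivWithinAt_Ici {γ : ℝ → E} {v : ℝ → E → E}
    (hγ : IsIntegralCurveOn γ v (Ici t₀)) (ht : t ∈ Ici t₀) :
    HasDerivWithinAt γ (v t (γ t)) (Ici t) t :=
  (hγ t ht).mono (Ici_subset_Ici.2 ht)

theorem IsIntegralCurveOn.eqOn_Ici_of_locallyLipschitz {v : E → E} (hv : LocallyLipschitz v)
    {f g : ℝ → E} (hf : IsIntegralCurveOn f (fun _ => v) (Ici t₀))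
    (hg : IsIntegralCurveOn g (fun _ => v) (Ici t₀)) (h : f t₀ = g t₀) :
    EqOn f g (Ici t₀) := by
  intro t ht
  have hfc := hf.continuousOn.mono (Icc_subset_Ici_self : Icc t₀ t ⊆ Ici t₀)
  have hgc := hg.continuousOn.mono (Icc_subset_Ici_self : Icc t₀ t ⊆ Ici t₀)
  obtain ⟨K, hK⟩ := hv.locallyLipschitzOn.exists_lipschitzOnWith_of_compact
    ((isCompact_Icc.image_of_continuousOn hfc).union (isCompact_Icc.image_of_continuousOn hgc))
  exact ODE_solution_unique_of_mem_Icc_right (fun _ _ => hK)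
    hfc (fun u hu => hf.hasDerivWithinAt_Ici hu.1)
    (fun u hu => .inl ⟨u, Ico_subset_Icc_self hu, rfl⟩)
    hgc (fun u hu => hg.hasDerivWithinAt_Ici hu.1)
    (fun u hu => .inr ⟨u, Ico_subset_Icc_self hu, rfl⟩)
    h ⟨ht, le_rfl⟩

variable [CompleteSpace E]

theorem exists_isIntegralCurveOn_Icc_of_lipschitzWith {v : E → E} {K : ℝ≥0}
    (hv : LipschitzWith K v) {C : ℝ≥0} (hC : ∀ x, ‖v x‖ ≤ C) (t₀ T : ℝ) (hT : 0 ≤ T)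
    (x₀ : E) :
    ∃ γ : ℝ → E, γ t₀ = x₀ ∧ IsIntegralCurveOn γ (fun _ => v) (Icc t₀ (t₀ + T)) := by
  have hpl : IsPicardLindelof (fun _ => v) (tmin := t₀) (tmax := t₀ + T)
      ⟨t₀, le_rfl, by linarith⟩ x₀ (C * T.toNNReal) 0 C K :=
    { lipschitzOnWith := fun _ _ => hv.lipschitzOnWith
      continuousOn := fun _ _ => continuousOn_const
      norm_le := fun _ _ x _ => hC x
      mul_max_le := by simp [hT] }
  exact hpl.exists_eq_forall_mem_Icc_hasDerivWithinAt₀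

theorem exists_isIntegralCurveOn_Ici_of_lipschitzWith {v : E → E} {K : ℝ≥0}
    (hv : LipschitzWith K v) {C : ℝ≥0} (hC : ∀ x, ‖v x‖ ≤ C) (t₀ : ℝ) (x₀ : E) :
    ∃ γ : ℝ → E, γ t₀ = x₀ ∧ IsIntegralCurveOn γ (fun _ => v) (Ici t₀) := by
  choose α hα0 hα using fun n : ℕ =>
    exists_isIntegralCurveOn_Icc_of_lipschitzWith hv hC t₀ n n.cast_nonneg x₀
  have hderiv (n : ℕ) :
      ∀ u ∈ Ico t₀ (t₀ + n), HasDerivWithinAt (α n) (v (α n u)) (Ici u) u := fun u hu =>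
    (hα n u (Ico_subset_Icc_self hu)).mono_of_mem_nhdsWithin (Icc_mem_nhdsGE_of_mem hu)
  have hagree {n m : ℕ} (hnm : n ≤ m) : EqOn (α n) (α m) (Icc t₀ (t₀ + n)) := by
    have hsub : Icc t₀ (t₀ + n) ⊆ Icc t₀ (t₀ + m) := Icc_subset_Icc_right (by gcongr)
    exact ODE_solution_unique (v := fun _ => v) (fun _ => hv) (hα n).continuousOn (hderiv n)
      ((hα m).continuousOn.mono hsub)
      (fun u hu => hderiv m u ⟨hu.1, hu.2.trans_le (by gcongr)⟩) ((hα0 n).trans (hα0 m).symm)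
  have hlt {t : ℝ} (ht : t₀ ≤ t) : t < t₀ + (⌈t - t₀⌉₊ + 1 : ℕ) := by
    push_cast; linarith [Nat.le_ceil (t - t₀)]
  set γ : ℝ → E := fun t => α (⌈t - t₀⌉₊ + 1) t
  have hγ (n : ℕ) : EqOn γ (α n) (Icc t₀ (t₀ + n)) := fun u hu => by
    rcases le_total n (⌈u - t₀⌉₊ + 1) with h | h
    · exact (hagree h hu).symm
    · exact hagree h ⟨hu.1, (hlt hu.1).le⟩
  refine ⟨γ, (hγ 0 ⟨le_rfl, by simp⟩).trans (hα0 0), fun t ht => ?_⟩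
  set n := ⌈t - t₀⌉₊ + 1
  have hmem : Icc t₀ (t₀ + n) ∈ 𝓝[Ici t₀] t := by
    rw [← Ici_inter_Iic]; exact inter_mem_nhdsWithin _ (Iic_mem_nhds (hlt ht))
  have htn : t ∈ Icc t₀ (t₀ + n) := ⟨ht, (hlt ht).le⟩
  rw [show γ t = α n t from hγ n htn]
  exact ((hα n t htn).mono_of_mem_nhdsWithin hmem).congr_of_eventuallyEq
    (Filter.eventuallyEq_of_mem hmem (hγ n)) (hγ n htn)

theorem LocallyLipschitz.exists_isIntegralCurveOn_Ici_comp {v : E → E}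
    (hv : LocallyLipschitz v) {π : E → E} {K : ℝ≥0} (hπ : LipschitzWith K π) {s : Set E}
    (hs : IsCompact s) (hπs : ∀ x, π x ∈ s) (t₀ : ℝ) (x₀ : E) :
    ∃ γ : ℝ → E, γ t₀ = x₀ ∧ IsIntegralCurveOn γ (fun _ => v ∘ π) (Ici t₀) := by
  obtain ⟨Kv, hKv⟩ := hv.locallyLipschitzOn.exists_lipschitzOnWith_of_compact hs
  obtain ⟨C, hC⟩ := hs.exists_bound_of_continuousOn hv.continuous.continuousOn
  exact exists_isIntegralCurveOn_Ici_of_lipschitzWith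
    (lipschitzOnWith_univ.1 (hKv.comp hπ.lipschitzOnWith fun x _ => hπs x))
    (C := C.toNNReal) (fun x => (hC _ (hπs x)).trans (Real.le_coe_toNNReal C)) t₀ x₀

end ODE

theorem Matrix.sum_mulVec_eq_zero {σ R : Type*} [Fintype σ] [NonUnitalNonAssocSemiring R]
    {M : Matrix σ σ R} (hM : ∀ s, ∑ k, M k s = 0) (x : σ → R) : ∑ s, (M *ᵥ x) s = 0 := by
  simp only [Matrix.mulVec, dotProduct]
  rw [sum_comm]
  simp [← sum_mul, hM]

theorem Matrix.mulVec_apply_nonneg_of_eq_zero {σ : Type*} [Fintype σ] {M : Matrix σ σ ℝ}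
    (hM : ∀ k s, k ≠ s → 0 ≤ M k s) {x : σ → ℝ} (hx : ∀ k, 0 ≤ x k) {s : σ} (hs : x s = 0) :
    0 ≤ (M *ᵥ x) s :=
  sum_nonneg fun k _ => by
    rcases eq_or_ne s k with rfl | hk
    · simp [hs]
    · exact mul_nonneg (hM s k hk) (hx k)

theorem IsIntegralCurveOn.mem_stdSimplex {ι σ : Type*} [Fintype ι] [Fintype σ]
    {V : (ι → σ → ℝ) → ι → σ → ℝ} (hsum : ∀ z i, ∑ s, V z i s = 0)
    (hnonneg : ∀ z i s, z i s < 0 → 0 ≤ V z i s)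
    {γ : ℝ → ι → σ → ℝ} {t₀ t : ℝ} (hγ : IsIntegralCurveOn γ (fun _ => V) (Ici t₀))
    (h₀ : ∀ i, γ t₀ i ∈ stdSimplex ℝ σ) (ht : t ∈ Ici t₀) (i : ι) :
    γ t i ∈ stdSimplex ℝ σ := by
  have hderiv (s : σ) : ∀ u ∈ Ico t₀ t,
      HasDerivWithinAt (fun u => γ u i s) (V (γ u) i s) (Ici u) u := fun u hu =>
    hasDerivWithinAt_pi.1 (hasDerivWithinAt_pi.1 (hγ.hasDerivWithinAt_Ici hu.1) i) s
  have hcont (s : σ) : ContinuousOn (fun u => γ u i s) (Icc t₀ t) :=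
    (continuous_apply_apply i s).comp_continuousOn (hγ.continuousOn.mono Icc_subset_Ici_self)
  refine ⟨fun s => image_nonneg_of_deriv_right_nonneg_of_neg (hcont s) (hderiv s)
    ((h₀ i).1 s) (fun u _ hu => hnonneg _ i s hu) ⟨ht, le_rfl⟩, ?_⟩
  have hconst := constant_of_has_deriv_right_zero (f := fun u => ∑ s, γ u i s)
    (continuousOn_finsetSum _ fun s _ => hcont s)
    (fun u hu => hsum (γ u) i ▸ HasDerivWithinAt.fun_sum (u := univ) fun s _ => hderiv s u hu)
    t ⟨ht, le_rfl⟩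
  exact hconst.trans (h₀ i).2

section Clamp

variable {ι σ : Type*}

noncomputable def clampUnit (z : ι → σ → ℝ) : ι → σ → ℝ :=
  Pi.map (fun _ => Pi.map fun _ x => projIcc 0 1 zero_le_one x) z

theorem lipschitzWith_clampUnit [Fintype ι] [Fintype σ] :
    LipschitzWith 1 (clampUnit (ι := ι) (σ := σ)) :=
  .piMap fun _ => .piMap fun _ => by
    have := (LipschitzWith.subtype_val _).comp (LipschitzWith.projIcc (zero_le_one' ℝ))
    rwa [mul_one] at this

theorem clampUnit_mem_Icc (z : ι → σ → ℝ) : clampUnit z ∈ Set.Icc 0 1 :=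
  ⟨fun i s => (projIcc 0 1 zero_le_one (z i s)).2.1,
    fun i s => (projIcc 0 1 zero_le_one (z i s)).2.2⟩

theorem clampUnit_eq_self {z : ι → σ → ℝ} (hz : z ∈ Set.Icc 0 1) : clampUnit z = z :=
  funext fun i => funext fun s =>
    congrArg Subtype.val (projIcc_of_mem _ ⟨hz.1 i s, hz.2 i s⟩)

theorem clampUnit_apply_eq_zero {z : ι → σ → ℝ} {i : ι} {s : σ} (hz : z i s ≤ 0) :
    clampUnit z i s = 0 :=
  congrArg Subtype.val (projIcc_of_le_left _ hz)

end Clamp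

section NIMFA

variable {ι σ : Type*} [Fintype ι]

/-- The paper's `ρ_i`. -/
noncomputable def nimfaRho (a : ι → ι → ℝ) (d : ℝ) (z : ι → σ → ℝ) (i : ι) : σ → ℝ :=
  fun r => (1 / d) * ∑ j, a i j * z j r

theorem nimfaRho_nonneg {a : ι → ι → ℝ} {d : ℝ} {z : ι → σ → ℝ} (ha : ∀ i j, 0 ≤ a i j)
    (hd : 0 ≤ d) (hz : ∀ j r, 0 ≤ z j r) (i : ι) (r : σ) : 0 ≤ nimfaRho a d z i r :=
  mul_nonneg (by positivity) (sum_nonneg fun j _ => mul_nonneg (ha i j) (hz j r))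

variable [Fintype σ]

noncomputable def nimfaField (Q : (σ → ℝ) → Matrix σ σ ℝ) (a : ι → ι → ℝ) (d : ℝ)
    (z : ι → σ → ℝ) : ι → σ → ℝ :=
  fun i => Q (nimfaRho a d z i) *ᵥ z i

variable {Q : (σ → ℝ) → Matrix σ σ ℝ} {a : ι → ι → ℝ} {d : ℝ} {z : ι → σ → ℝ}

theorem locallyLipschitz_nimfaField (hQ : ∀ k s, LocallyLipschitz fun φ => Q φ k s)
    (a : ι → ι → ℝ) (d : ℝ) : LocallyLipschitz (nimfaField Q a d) := by
  have hρ (i : ι) : LocallyLipschitz fun z : ι → σ → ℝ => nimfaRho a d z i :=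
    (by unfold nimfaRho; fun_prop : ContDiff ℝ 1 _).locallyLipschitz
  have hmulVec : LocallyLipschitz fun p : (ι → σ → σ → ℝ) × (ι → σ → ℝ) =>
      fun i s => ∑ k, p.1 i s k * p.2 i k :=
    (by fun_prop : ContDiff ℝ 1 _).locallyLipschitz
  have hQρ : LocallyLipschitz fun z : ι → σ → ℝ => fun i s k => Q (nimfaRho a d z i) s k :=
    .pi fun i => .pi fun s => .pi fun k => (hQ s k).comp (hρ i)
  convert hmulVec.comp (hQρ.prodMk .id) using 1
  ext z i s
  rfl

theorem sum_nimfaField_eq_zero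
    (hQsum : ∀ φ : σ → ℝ, (∀ r, 0 ≤ φ r) → ∀ s, ∑ k, Q φ k s = 0)
    (ha : ∀ i j, 0 ≤ a i j) (hd : 0 ≤ d) (hz : ∀ j r, 0 ≤ z j r) (i : ι) :
    ∑ s, nimfaField Q a d z i s = 0 :=
  Matrix.sum_mulVec_eq_zero (hQsum _ (nimfaRho_nonneg ha hd hz i)) _

theorem nimfaField_nonneg_of_eq_zero
    (hQpos : ∀ φ : σ → ℝ, (∀ r, 0 ≤ φ r) → ∀ k s, k ≠ s → 0 ≤ Q φ k s)
    (ha : ∀ i j, 0 ≤ a i j) (hd : 0 ≤ d) (hz : ∀ j r, 0 ≤ z j r) {i : ι} {s : σ}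
    (hs : z i s = 0) : 0 ≤ nimfaField Q a d z i s :=
  Matrix.mulVec_apply_nonneg_of_eq_zero (hQpos _ (nimfaRho_nonneg ha hd hz i)) (hz i) hs

end NIMFA

/-- for the NIMFA system `ż_i = Q(ρ_i) z_i`,
`ρ_i = (1/⟨d⟩) ∑_j a_{ij} z_j`, with locally Lipschitz rate matrices (nonnegative
off-diagonal entries, zero column sums on the relevant domain), initial conditions in the
simplex yield a global solution, unique on `[0,∞)`, which stays in the simplex. -/
theorem stmt15 (S N : ℕ)
    (Q : (Fin S → ℝ) → Matrix (Fin S) (Fin S) ℝ)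
    (hQlip : ∀ k s, LocallyLipschitz fun φ => Q φ k s)
    (hQpos : ∀ φ : Fin S → ℝ, (∀ r, 0 ≤ φ r) → ∀ k s, k ≠ s → 0 ≤ Q φ k s)
    (hQsum : ∀ φ : Fin S → ℝ, (∀ r, 0 ≤ φ r) → ∀ s, ∑ k : Fin S, Q φ k s = 0)
    (a : Fin N → Fin N → ℝ) (ha : ∀ i j, 0 ≤ a i j) (Davg : ℝ) (hD : 0 < Davg)
    (z0 : Fin N → Fin S → ℝ) (hz0 : ∀ i, z0 i ∈ stdSimplex15 S) :
    ∃ z : Fin N → ℝ → Fin S → ℝ,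
      ((∀ i, z i 0 = z0 i) ∧
        ∀ i, ∀ t : ℝ, 0 ≤ t → HasDerivWithinAt (z i)
          (fun s => ∑ k : Fin S,
            Q (fun r => (1 / Davg) * ∑ j : Fin N, a i j * z j t r) s k * z i t k)
          (Set.Ici 0) t) ∧
      (∀ i, ∀ t : ℝ, 0 ≤ t → z i t ∈ stdSimplex15 S) ∧
      (∀ z' : Fin N → ℝ → Fin S → ℝ,
        ((∀ i, z' i 0 = z0 i) ∧
          ∀ i, ∀ t : ℝ, 0 ≤ t → HasDerivWithinAt (z' i)
            (fun s => ∑ k : Fin S,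
              Q (fun r => (1 / Davg) * ∑ j : Fin N, a i j * z' j t r) s k * z' i t k)
            (Set.Ici 0) t) →
        ∀ i, ∀ t : ℝ, 0 ≤ t → z' i t = z i t) := by
  set F := nimfaField Q a Davg
  have hF : LocallyLipschitz F := locallyLipschitz_nimfaField hQlip a Davg
  obtain ⟨Z, hZ0, hZ⟩ := hF.exists_isIntegralCurveOn_Ici_comp lipschitzWith_clampUnit
    isCompact_Icc clampUnit_mem_Icc 0 z0
  have hZmem : ∀ t ∈ Ici (0 : ℝ), ∀ i, Z t i ∈ stdSimplex ℝ (Fin S) := fun t ht =>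
    hZ.mem_stdSimplex (fun z => sum_nimfaField_eq_zero hQsum ha hD.le (clampUnit_mem_Icc z).1)
      (fun z _ _ hs => nimfaField_nonneg_of_eq_zero hQpos ha hD.le (clampUnit_mem_Icc z).1
        (clampUnit_apply_eq_zero hs.le)) (fun i => hZ0 ▸ hz0 i) ht
  have hZF : IsIntegralCurveOn Z (fun _ => F) (Ici 0) := fun t ht => by
    have hcube : Z t ∈ Set.Icc 0 1 :=
      ⟨fun i s => (mem_Icc_of_mem_stdSimplex (hZmem t ht i) s).1,
        fun i s => (mem_Icc_of_mem_stdSimplex (hZmem t ht i) s).2⟩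
    simpa only [Function.comp_apply, clampUnit_eq_self hcube] using hZ t ht
  refine ⟨fun i t => Z t i, ⟨fun i => congrFun hZ0 i,
    fun i t ht => hasDerivWithinAt_pi.1 (hZF t ht) i⟩, fun i t ht => hZmem t ht i, ?_⟩
  rintro z' ⟨hz'0, hz'⟩ i t ht
  have hz'F : IsIntegralCurveOn (fun u j => z' j u) (fun _ => F) (Ici 0) := fun u hu =>
    hasDerivWithinAt_pi.2 fun j => hz' j u hu
  exact congrFun (hz'F.eqOn_Ici_of_locallyLipschitz hF hZF
    (funext fun j => (hz'0 j).trans (congrFun hZ0 j).symm) ht) i
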